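/- Let 0 < μ < L, let x_i, x_j, g_i, g_j ∈ E and f_i, f_j ∈ ℝ, and define Q^func_{μ,L} = f_j − f_i − ⟪g_i, x_j − x_i⟫ − (1/(2(1 − μ/L)))·((1/L)‖g_i − g_j‖² + μ‖x_i − x_j‖² − (2μ/L)⟪g_i − g_j, x_i − x_j⟫). Then there exist constants M > 0 and η₀ > 0 such that for all η ∈ (0, η₀), |Q^set_{η²μ, η²L}(i,j)(η) − Q^func_{μ,L}| ≤ M·η². -/

import Mathlib

open Metric Set
open scoped RealInnerProductSpace

noncomputable section

/-- The point `ζ_i(η) = (x_i/η, f_i)` in `E × ℝ` with the `ℓ²` product structure. -/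
def zetaPt {d : ℕ} (x : EuclideanSpace ℝ (Fin d)) (f η : ℝ) :
    WithLp 2 (EuclideanSpace ℝ (Fin d) × ℝ) :=
  (WithLp.equiv 2 (EuclideanSpace ℝ (Fin d) × ℝ)).symm (η⁻¹ • x, f)

/-- The unit vector `ν_i(η) = (η g_i, -1) / ‖(η g_i, -1)‖` in `E × ℝ`. -/
def nuVec {d : ℕ} (g : EuclideanSpace ℝ (Fin d)) (η : ℝ) :
    WithLp 2 (EuclideanSpace ℝ (Fin d) × ℝ) :=
  ‖(WithLp.equiv 2 (EuclideanSpace ℝ (Fin d) × ℝ)).symm (η • g, (-1 : ℝ))‖⁻¹ •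
    (WithLp.equiv 2 (EuclideanSpace ℝ (Fin d) × ℝ)).symm (η • g, (-1 : ℝ))

/-- The set-interpolation quantity
`Q^set_{a,b}(i,j)(η) = (a/(2(1-a/b))) ((1/a-1/b)² - ‖ζ_j - (1/b)ν_j - ζ_i + (1/a)ν_i‖²)`. -/
def Qset {d : ℕ} (a b : ℝ) (xi gi : EuclideanSpace ℝ (Fin d)) (fi : ℝ)
    (xj gj : EuclideanSpace ℝ (Fin d)) (fj : ℝ) (η : ℝ) : ℝ :=
  a / (2 * (1 - a / b)) *
    ((1 / a - 1 / b) ^ 2 -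
      ‖zetaPt xj fj η - (1 / b) • nuVec gj η - zetaPt xi fi η + (1 / a) • nuVec gi η‖ ^ 2)

/-- The function-interpolation quantity `Q^func_{μ,L}`. -/
def Qfunc {d : ℕ} (μ L : ℝ) (xi gi : EuclideanSpace ℝ (Fin d)) (fi : ℝ)
    (xj gj : EuclideanSpace ℝ (Fin d)) (fj : ℝ) : ℝ :=
  fj - fi - ⟪gi, xj - xi⟫ -
    1 / (2 * (1 - μ / L)) *
      ((1 / L) * ‖gi - gj‖ ^ 2 + μ * ‖xi - xj‖ ^ 2 - 2 * μ / L * ⟪gi - gj, xi - xj⟫)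

/-!
Put `t = η²` and `s = ‖(η g, -1)‖ = √(1 + t ‖g‖²)`. Expanding the squared norm in `Q^set_{tμ,tL}`,
the terms of order `1/t` combine into `(1 - 1/s)/t = ‖g‖² / (s (s + 1))`, so `Q^set_{tμ,tL}(η)` is
`φ(η²)` for a function `φ` that is differentiable at `0` with `φ(0) = Q^func_{μ,L}`. A function
differentiable at `0` moves by `O(t)` near `0`, which is the claim with `t = η²`.
-/

open Filter Topology Asymptotics

theorem DifferentiableAt.exists_norm_sub_le_mul_sq {F : Type*} [NormedAddCommGroup F]
    [NormedSpace ℝ F] {φ : ℝ → F} (h : DifferentiableAt ℝ φ 0) :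
    ∃ M > (0 : ℝ), ∃ η₀ > (0 : ℝ), ∀ η : ℝ, 0 < η → η < η₀ → ‖φ (η ^ 2) - φ 0‖ ≤ M * η ^ 2 := by
  obtain ⟨M, hM, hO⟩ := h.hasDerivAt.isBigO_sub.exists_pos
  have hsq : Tendsto (fun η : ℝ => η ^ 2) (𝓝 0) (𝓝 0) := by
    simpa using (continuous_pow 2).tendsto (0 : ℝ)
  obtain ⟨η₀, hη₀, hbound⟩ := Metric.eventually_nhds_iff.1 (hsq.eventually hO.bound)
  refine ⟨M, hM, η₀, hη₀, fun η hη hηη₀ => ?_⟩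
  simpa using @hbound η (by rwa [Real.dist_eq, sub_zero, _root_.abs_of_pos hη])

section
variable {E : Type*} [SeminormedAddCommGroup E]

def nuNorm (g : E) (t : ℝ) : ℝ := √(1 + t * ‖g‖ ^ 2)

lemma nuNorm_pos (g : E) {t : ℝ} (ht : 0 ≤ t) : 0 < nuNorm g t :=
  Real.sqrt_pos.2 (by positivity)

def nuDefect (g : E) (t : ℝ) : ℝ := ‖g‖ ^ 2 / (nuNorm g t * (nuNorm g t + 1))

lemma one_sub_inv_nuNorm (g : E) {t : ℝ} (ht : 0 ≤ t) :
    1 - (nuNorm g t)⁻¹ = t * nuDefect g t := by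
  have hs := nuNorm_pos g ht
  have hsq : nuNorm g t ^ 2 = 1 + t * ‖g‖ ^ 2 := Real.sq_sqrt (by positivity)
  rw [nuDefect]
  field_simp
  linear_combination hsq

lemma norm_toLp_smul_neg_one [NormedSpace ℝ E] (g : E) (η : ℝ) :
    ‖WithLp.toLp 2 (η • g, (-1 : ℝ))‖ = nuNorm g (η ^ 2) := by
  rw [WithLp.prod_norm_eq_of_L2, nuNorm, WithLp.toLp_fst, WithLp.toLp_snd, norm_smul, mul_pow,
    Real.norm_eq_abs, sq_abs, norm_neg, norm_one]
  ring_nf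

end

/-- For `t > 0` this is `Qset (t * μ) (t * L) xi gi fi xj gj fj √t`, written without negative
powers of `t`. -/
def QsetProfile {d : ℕ} (μ L : ℝ) (xi gi : EuclideanSpace ℝ (Fin d)) (fi : ℝ)
    (xj gj : EuclideanSpace ℝ (Fin d)) (fj : ℝ) (t : ℝ) : ℝ :=
  μ / (2 * (1 - μ / L)) *
    ((1 / μ - 1 / L - (1 / (L * nuNorm gj t) - 1 / (μ * nuNorm gi t))) *
        (nuDefect gi t / μ - nuDefect gj t / L) -
      ‖xj - xi + (1 / (μ * nuNorm gi t)) • gi - (1 / (L * nuNorm gj t)) • gj‖ ^ 2 -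
      2 * (fj - fi) * (1 / (L * nuNorm gj t) - 1 / (μ * nuNorm gi t)) - t * (fj - fi) ^ 2)

section
variable {d : ℕ} {μ L : ℝ} (xi gi : EuclideanSpace ℝ (Fin d)) (fi : ℝ)
  (xj gj : EuclideanSpace ℝ (Fin d)) (fj : ℝ)

lemma differentiableAt_QsetProfile (hμ : μ ≠ 0) (hL : L ≠ 0) :
    DifferentiableAt ℝ (QsetProfile μ L xi gi fi xj gj fj) 0 := by
  unfold QsetProfile nuDefect nuNorm
  have hX : DifferentiableAt ℝ (fun t : ℝ => ‖xj - xi + (1 / (μ * √(1 + t * ‖gi‖ ^ 2))) • gi -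
      (1 / (L * √(1 + t * ‖gj‖ ^ 2))) • gj‖ ^ 2) 0 :=
    DifferentiableAt.norm_sq ℝ (by fun_prop (disch := simp [hμ, hL]))
  fun_prop (disch := simp [hμ, hL])

lemma QsetProfile_zero (hμ : μ ≠ 0) (hL : L ≠ 0) (hμL : μ ≠ L) :
    QsetProfile μ L xi gi fi xj gj fj 0 = Qfunc μ L xi gi fi xj gj fj := by
  have hK : 1 - μ / L ≠ 0 := by
    rw [sub_ne_zero, ne_eq, eq_div_iff hL, one_mul]; exact hμL.symm
  simp only [QsetProfile, Qfunc, nuDefect, nuNorm, zero_mul, add_zero, Real.sqrt_one, mul_one,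
    sub_zero]
  simp only [← real_inner_self_eq_norm_sq, inner_add_left, inner_add_right, inner_sub_left,
    inner_sub_right, real_inner_smul_left, real_inner_smul_right]
  rw [real_inner_comm xj xi, real_inner_comm gi xi, real_inner_comm gj xi,
    real_inner_comm gi xj, real_inner_comm gj xj, real_inner_comm gj gi]
  field_simp
  ring

lemma nuVec_eq (g : EuclideanSpace ℝ (Fin d)) (η : ℝ) :
    nuVec g η = WithLp.toLp 2 ((η / nuNorm g (η ^ 2)) • g, -(nuNorm g (η ^ 2))⁻¹) := by
  rw [nuVec, WithLp.equiv_symm_apply, norm_toLp_smul_neg_one, ← WithLp.toLp_smul, Prod.smul_mk,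
    smul_smul, smul_eq_mul, mul_neg_one, div_eq_inv_mul]

theorem Qset_sq_mul_eq_QsetProfile {η : ℝ} (hμ : μ ≠ 0) (hL : L ≠ 0) (hη : η ≠ 0) :
    Qset (η ^ 2 * μ) (η ^ 2 * L) xi gi fi xj gj fj η =
      QsetProfile μ L xi gi fi xj gj fj (η ^ 2) := by
  have ht : 0 ≤ η ^ 2 := sq_nonneg η
  have hi := one_sub_inv_nuNorm gi ht
  have hj := one_sub_inv_nuNorm gj ht
  have hsi : nuNorm gi (η ^ 2) ≠ 0 := (nuNorm_pos gi ht).ne'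
  have hsj : nuNorm gj (η ^ 2) ≠ 0 := (nuNorm_pos gj ht).ne'
  rw [Qset, QsetProfile]
  set X := xj - xi + (1 / (μ * nuNorm gi (η ^ 2))) • gi - (1 / (L * nuNorm gj (η ^ 2))) • gj
  set T := 1 / (L * nuNorm gj (η ^ 2)) - 1 / (μ * nuNorm gi (η ^ 2)) with hT
  have hv : zetaPt xj fj η - (1 / (η ^ 2 * L)) • nuVec gj η - zetaPt xi fi η +
      (1 / (η ^ 2 * μ)) • nuVec gi η = WithLp.toLp 2 (η⁻¹ • X, fj - fi + T / η ^ 2) := by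
    simp only [zetaPt, nuVec_eq, WithLp.equiv_symm_apply, ← WithLp.toLp_smul, ← WithLp.toLp_sub,
      ← WithLp.toLp_add, Prod.smul_mk, Prod.mk_sub_mk, Prod.mk_add_mk, smul_eq_mul]
    congr 2
    · simp only [X, smul_add, smul_sub, smul_smul]
      match_scalars <;> field_simp
    · rw [hT]
      field_simp
      ring
  have hD : nuDefect gi (η ^ 2) / μ - nuDefect gj (η ^ 2) / L = (1 / μ - 1 / L + T) / η ^ 2 := by
    rw [eq_div_iff (pow_ne_zero 2 hη), hT]
    linear_combination (1 / L) * hj - (1 / μ) * hi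
  rw [hv, WithLp.prod_norm_sq_eq_of_L2, WithLp.toLp_fst, WithLp.toLp_snd, norm_smul, mul_pow, hD,
    mul_div_mul_left _ _ (pow_ne_zero 2 hη)]
  clear_value X T
  simp only [Real.norm_eq_abs, sq_abs]
  field_simp
  ring

end

theorem Qset_approx_Qfunc_general {d : ℕ} (μ L : ℝ) (hμ : 0 < μ) (hμL : μ < L)
    (xi xj gi gj : EuclideanSpace ℝ (Fin d)) (fi fj : ℝ) :
    ∃ M > (0 : ℝ), ∃ η₀ > (0 : ℝ), ∀ η : ℝ, 0 < η → η < η₀ →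
      |Qset (η ^ 2 * μ) (η ^ 2 * L) xi gi fi xj gj fj η - Qfunc μ L xi gi fi xj gj fj| ≤
        M * η ^ 2 := by
  have hL : L ≠ 0 := (hμ.trans hμL).ne'
  obtain ⟨M, hM, η₀, hη₀, hbound⟩ :=
    (differentiableAt_QsetProfile xi gi fi xj gj fj hμ.ne' hL).exists_norm_sub_le_mul_sq
  refine ⟨M, hM, η₀, hη₀, fun η hη hηη₀ => ?_⟩
  rw [Qset_sq_mul_eq_QsetProfile xi gi fi xj gj fj hμ.ne' hL hη.ne',
    ← QsetProfile_zero xi gi fi xj gj fj hμ.ne' hL hμL.ne]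
  exact hbound η hη hηη₀

/-- `Q^set_{η²μ, η²L}(i,j)(η) = Q^func_{μ,L}(i,j) + O(η²)` as `η → 0`. -/
theorem Qset_approx_Qfunc {d : ℕ} (hd : 1 ≤ d) (μ L : ℝ) (hμ : 0 < μ) (hμL : μ < L)
    (xi xj gi gj : EuclideanSpace ℝ (Fin d)) (fi fj : ℝ) :
    ∃ M > (0 : ℝ), ∃ η₀ > (0 : ℝ), ∀ η : ℝ, 0 < η → η < η₀ →
      |Qset (η ^ 2 * μ) (η ^ 2 * L) xi gi fi xj gj fj η - Qfunc μ L xi gi fi xj gj fj| ≤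
        M * η ^ 2 :=
  Qset_approx_Qfunc_general μ L hμ hμL xi xj gi gj fi fj
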